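/- arXiv:1905.00101 — 2 statements merged into one kernel-verified Lean document; each statement's English description precedes it below -/
import Mathlib

section
/- Let n ≥ 1, let ℱ be a nonempty finite family of nonempty subsets of ℝⁿ, each S ∈ ℱ assigned a number ℓ(S) > 0, and define d_ℱ(x) := inf_{S∈ℱ}(ℓ(S) + dist(x,S)) and d_ℱ(I) := inf_{x∈I} d_ℱ(x) for a dyadic cube I. Let 0 < η < 1 and let 0 < τ < η/(2√n); let 𝒞_ℱ be the collection of maximal dyadic cubes I of ℝⁿ satisfying ℓ(I) < τ d_ℱ(I). Then there is a constant C = C(n,η) ≥ 1 such that for all I, J ∈ 𝒞_ℱ with η⁻¹I ∩ η⁻¹J ≠ ∅ (where η⁻¹I denotes the cube with the same center as I and sidelength η⁻¹ℓ(I)), one has C⁻¹ ℓ(J) ≤ ℓ(I) ≤ C ℓ(J). -/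
open MeasureTheory Metric Set
open scoped ENNReal NNReal

noncomputable section

namespace QCMGP

abbrev Euc (n : ℕ) := EuclideanSpace ℝ (Fin n)

/-- The `d`-dimensional Hausdorff content `ℋ^d_∞`. -/
def hcontent (n : ℕ) (d : ℝ) (A : Set (Euc n)) : ℝ≥0∞ :=
  ⨅ (U : ℕ → Set (Euc n)) (_ : A ⊆ ⋃ i, U i), ∑' i, EMetric.diam (U i) ^ d

/-- `E` is `(c,d)`-lower content regular: `ℋ^d_∞(E ∩ B(x,r)) ≥ c rᵈ` for all `x ∈ E`
and `0 < r < diam E`. -/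
def LowerContentRegular (n : ℕ) (c d : ℝ) (E : Set (Euc n)) : Prop :=
  ∀ x ∈ E, ∀ r : ℝ, 0 < r → ENNReal.ofReal r < EMetric.diam E →
    ENNReal.ofReal c * ENNReal.ofReal r ^ d ≤ hcontent n d (E ∩ ball x r)

/-- Normalized local Hausdorff distance `d_B(A,B)` for the ball `B = B(x,r)`
(the factor `2 / diam B` equals `r⁻¹`). -/
def ndist (n : ℕ) (x : Euc n) (r : ℝ) (A B : Set (Euc n)) : ℝ :=
  r⁻¹ * max (⨆ y : ↥(A ∩ ball x r), Metric.infDist y.1 B)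
            (⨆ y : ↥(B ∩ ball x r), Metric.infDist y.1 A)

/-- `L` is a `d`-plane: a nonempty `d`-dimensional affine subspace. -/
def IsPlane (n d : ℕ) (L : AffineSubspace ℝ (Euc n)) : Prop :=
  (L : Set (Euc n)).Nonempty ∧ Module.finrank ℝ L.direction = d

/-- `U` is a union of `d`-planes. -/
def IsUnionOfPlanes (n d : ℕ) (U : Set (Euc n)) : Prop :=
  ∃ Ps : Set (AffineSubspace ℝ (Euc n)),
    (∀ L ∈ Ps, IsPlane n d L) ∧ U = ⋃ L ∈ Ps, (L : Set (Euc n))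

/-- `β_E^{d,p}(B(x,r), L)`. -/
def betaPlane (n d : ℕ) (p : ℝ) (E : Set (Euc n)) (x : Euc n) (r : ℝ)
    (L : AffineSubspace ℝ (Euc n)) : ℝ≥0∞ :=
  ((ENNReal.ofReal r ^ (d : ℝ))⁻¹ *
    ∫⁻ t in Set.Ioo (0 : ℝ) 1,
      hcontent n d {y | y ∈ ball x r ∩ E ∧ t * r < Metric.infDist y (L : Set (Euc n))} *
        ENNReal.ofReal (t ^ (p - 1))) ^ (1 / p)

/-- `β_E^{d,p}(B(x,r))`. -/
def beta (n d : ℕ) (p : ℝ) (E : Set (Euc n)) (x : Euc n) (r : ℝ) : ℝ≥0∞ :=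
  ⨅ (L : AffineSubspace ℝ (Euc n)) (_ : IsPlane n d L), betaPlane n d p E x r L

/-- A system of Christ–David cubes for `E`, with parameter `ρ ∈ (0,1/1000)` and
`c₀ = 1/500`.  A cube is recorded together with its scale `k`; its sidelength is
`ℓ(Q) = 5 ρ^k`. -/
structure CDS (n : ℕ) (E : Set (Euc n)) where
  ρ : ℝ
  ρ_pos : 0 < ρ
  ρ_small : ρ < 1 / 1000
  cubes : Set (ℤ × Set (Euc n))
  center : ℤ × Set (Euc n) → Euc n
  borel : ∀ Q ∈ cubes, MeasurableSet Q.2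
  subset_amb : ∀ Q ∈ cubes, Q.2 ⊆ E
  cover : ∀ k : ℤ, ∀ x ∈ E, ∃! Q, Q ∈ cubes ∧ Q.1 = k ∧ x ∈ Q.2
  nested : ∀ Q ∈ cubes, ∀ Q' ∈ cubes, (Q.2 ∩ Q'.2).Nonempty → Q.2 ⊆ Q'.2 ∨ Q'.2 ⊆ Q.2
  center_mem : ∀ Q ∈ cubes, center Q ∈ Q.2
  ball_subset : ∀ Q ∈ cubes, ball (center Q) ((1 / 500) * (5 * ρ ^ Q.1)) ∩ E ⊆ Q.2
  subset_ball : ∀ Q ∈ cubes, Q.2 ⊆ ball (center Q) (5 * ρ ^ Q.1)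

/-- The sidelength `ℓ(Q) = 5 ρ^k` of a cube. -/
def CDS.len {n : ℕ} {E : Set (Euc n)} (𝒟 : CDS n E) (Q : ℤ × Set (Euc n)) : ℝ :=
  5 * 𝒟.ρ ^ Q.1

/-- `β_{E,A,p}(R) = ℓ(R)^d + Σ_{Q ⊆ R} β_E^{d,p}(A B_Q)² ℓ(Q)^d`. -/
def CDS.betaSum {n : ℕ} {E : Set (Euc n)} (𝒟 : CDS n E) (d : ℕ) (A p : ℝ)
    (R : ℤ × Set (Euc n)) : ℝ≥0∞ :=
  ENNReal.ofReal (𝒟.len R) ^ (d : ℝ) +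
    ∑' Q : {Q : ℤ × Set (Euc n) // Q ∈ 𝒟.cubes ∧ Q.2 ⊆ R.2},
      beta n d p E (𝒟.center Q.1) (A * 𝒟.len Q.1) ^ 2 *
        ENNReal.ofReal (𝒟.len Q.1) ^ (d : ℝ)

/-- `Σ_{Q ⊆ R, Q bad} ℓ(Q)^d`, the sum of `ℓ(Q)^d` over the subcubes of `R`
satisfying the "bad cube" condition `P`. -/
def CDS.badSum {n : ℕ} {E : Set (Euc n)} (𝒟 : CDS n E) (d : ℕ)
    (R : ℤ × Set (Euc n)) (P : ℤ × Set (Euc n) → Prop) : ℝ≥0∞ :=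
  ∑' Q : {Q : ℤ × Set (Euc n) // Q ∈ 𝒟.cubes ∧ Q.2 ⊆ R.2 ∧ P Q},
    ENNReal.ofReal (𝒟.len Q.1) ^ (d : ℝ)

/-- The sphere of radius `s` centered at `z` inside the affine subspace `W`. -/
def sphereIn (n : ℕ) (W : AffineSubspace ℝ (Euc n)) (z : Euc n) (s : ℝ) : Set (Euc n) :=
  Metric.sphere z s ∩ (W : Set (Euc n))

/-- The pair `(x,r)` is `ε`-GWEC-bad for `F`: there is an `(n-d-1)`-dimensional sphere
`S ⊆ B(x,r)` with `dist(S,F) > εr`, contractible to a point inside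
`{y ∈ B(x,r) : dist(y,F) > εr}`, whose convex hull meets `F`. -/
def GWECBad (n d : ℕ) (ε : ℝ) (F : Set (Euc n)) (x : Euc n) (r : ℝ) : Prop :=
  ∃ (W : AffineSubspace ℝ (Euc n)) (z : Euc n) (s : ℝ),
    z ∈ W ∧ 0 < s ∧ Module.finrank ℝ W.direction = n - d ∧
    sphereIn n W z s ⊆ ball x r ∧
    (ENNReal.ofReal (ε * r) < ⨅ y ∈ sphereIn n W z s, EMetric.infEdist y F) ∧
    (∃ H : Euc n × ℝ → Euc n,
      ContinuousOn H (sphereIn n W z s ×ˢ Set.Icc (0 : ℝ) 1) ∧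
      (∀ q ∈ sphereIn n W z s ×ˢ Set.Icc (0 : ℝ) 1,
        H q ∈ ball x r ∧ ε * r < Metric.infDist (H q) F) ∧
      (∀ y ∈ sphereIn n W z s, H (y, 0) = y) ∧
      (∃ y₀ : Euc n, ∀ y ∈ sphereIn n W z s, H (y, 1) = y₀)) ∧
    (convexHull ℝ (sphereIn n W z s) ∩ F).Nonempty

/-- `F` is Ahlfors `d`-regular with constant `A ≥ 1`. -/
def AhlforsRegular (n : ℕ) (d A : ℝ) (F : Set (Euc n)) : Prop :=
  1 ≤ A ∧ ∀ x ∈ F, ∀ r : ℝ, 0 < r → ENNReal.ofReal r < EMetric.diam F →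
    ENNReal.ofReal (r ^ d / A) ≤ μH[d] (F ∩ ball x r) ∧
      μH[d] (F ∩ ball x r) ≤ ENNReal.ofReal (A * r ^ d)

/-- `F` is uniformly rectifiable: Ahlfors `d`-regular with big pieces of Lipschitz images. -/
def UnifRect (n d : ℕ) (F : Set (Euc n)) : Prop :=
  (∃ A : ℝ, AhlforsRegular n d A F) ∧
    ∃ (L : ℝ≥0) (θ : ℝ), 0 < L ∧ 0 < θ ∧
      ∀ x ∈ F, ∀ r : ℝ, 0 < r → ENNReal.ofReal r < EMetric.diam F →
        ∃ f : EuclideanSpace ℝ (Fin d) → Euc n, LipschitzWith L f ∧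
          ENNReal.ofReal (θ * r ^ (d : ℝ)) ≤ μH[(d : ℝ)] (f '' Set.univ ∩ ball x r)

/-- The measure `1_ℬ(x,r) (dr/r) dℋ^d|_F(x)` is a Carleson measure on `F × (0,∞)`. -/
def CarlesonBad (n : ℕ) (d : ℝ) (F : Set (Euc n)) (ℬ : Set (Euc n × ℝ)) : Prop :=
  ∃ M : ℝ, 0 ≤ M ∧ ∀ x ∈ F, ∀ r : ℝ, 0 < r → ENNReal.ofReal r ≤ EMetric.diam F →
    (∫⁻ y in ball x r ∩ F,
        ∫⁻ s in Set.Ioo (0 : ℝ) r,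
          Set.indicator ℬ (fun q => (ENNReal.ofReal q.2)⁻¹) (y, s) ∂μH[d])
      ≤ ENNReal.ofReal (M * r ^ d)

/-- `Q ⊆ R` for scaled cubes: `Q` is contained in `R` and has smaller or equal scale. -/
def cubeLE {n : ℕ} (Q R : ℤ × Set (Euc n)) : Prop := R.1 ≤ Q.1 ∧ Q.2 ⊆ R.2

/-- `Q'` is a child of `Q`. -/
def CDS.child {n : ℕ} {E : Set (Euc n)} (𝒟 : CDS n E) (Q Q' : ℤ × Set (Euc n)) : Prop :=
  Q' ∈ 𝒟.cubes ∧ Q'.1 = Q.1 + 1 ∧ Q'.2 ⊆ Q.2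

/-- `𝒯` is a stopping-time region with maximal cube `top`. -/
def CDS.IsStoppingTime {n : ℕ} {E : Set (Euc n)} (𝒟 : CDS n E)
    (𝒯 : Set (ℤ × Set (Euc n))) (top : ℤ × Set (Euc n)) : Prop :=
  𝒯 ⊆ 𝒟.cubes ∧ top ∈ 𝒯 ∧ (∀ Q ∈ 𝒯, cubeLE Q top) ∧
    (∀ Q ∈ 𝒯, ∀ R ∈ 𝒟.cubes, cubeLE Q R → cubeLE R top → R ∈ 𝒯) ∧
    (∀ Q ∈ 𝒯, (∃ Q', 𝒟.child Q Q' ∧ Q' ∉ 𝒯) → ∀ Q', 𝒟.child Q Q' → Q' ∉ 𝒯)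

/-- The minimal cubes of a collection `𝒯` of cubes. -/
def minCubes {n : ℕ} (𝒯 : Set (ℤ × Set (Euc n))) : Set (ℤ × Set (Euc n)) :=
  {Q ∈ 𝒯 | ∀ Q' ∈ 𝒯, cubeLE Q' Q → Q' = Q}

/-- `d_ℱ(x) = inf_{S ∈ ℱ} (ℓ(S) + dist(x,S))` for a family `ℱ` of Christ–David cubes. -/
def CDS.dFam {n : ℕ} {E : Set (Euc n)} (𝒟 : CDS n E)
    (ℱ : Set (ℤ × Set (Euc n))) (x : Euc n) : ℝ :=
  ⨅ S : ℱ, (𝒟.len S.1 + Metric.infDist x S.1.2)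

/-- The (half-open) dyadic cube of ℝⁿ of sidelength `2^{-m}` indexed by `k`. -/
def dyC (n : ℕ) (m : ℤ) (k : Fin n → ℤ) : Set (Euc n) :=
  {x | ∀ i, (k i : ℝ) * (2 : ℝ) ^ (-m) ≤ x i ∧ x i < ((k i : ℝ) + 1) * (2 : ℝ) ^ (-m)}

/-- The `d`-dimensional skeleton of the (closed) dyadic cube indexed by `(m,k)`:
the union of its `d`-dimensional faces. -/
def skel (n d : ℕ) (m : ℤ) (k : Fin n → ℤ) : Set (Euc n) :=
  ⋃ (F : Finset (Fin n)) (_ : F.card = d) (ε : Fin n → Fin 2),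
    {x | (∀ i ∈ F, (k i : ℝ) * (2 : ℝ) ^ (-m) ≤ x i ∧
            x i ≤ ((k i : ℝ) + 1) * (2 : ℝ) ^ (-m)) ∧
      ∀ i ∉ F, x i = ((k i : ℝ) + ((ε i : ℕ) : ℝ)) * (2 : ℝ) ^ (-m)}

/-- The concentric dilate `η⁻¹ I` of the dyadic cube indexed by `(m,k)`. -/
def dilC (n : ℕ) (η : ℝ) (m : ℤ) (k : Fin n → ℤ) : Set (Euc n) :=
  {x | ∀ i, |x i - ((k i : ℝ) + 1 / 2) * (2 : ℝ) ^ (-m)| ≤ η⁻¹ * (2 : ℝ) ^ (-m) / 2}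

/-- The dyadic cube `I` is maximal with property `P`: it has `P`, and no dyadic
cube properly containing it has `P`. -/
def MaxWith (n : ℕ) (P : ℤ × (Fin n → ℤ) → Prop) (I : ℤ × (Fin n → ℤ)) : Prop :=
  P I ∧ ∀ J : ℤ × (Fin n → ℤ), dyC n I.1 I.2 ⊆ dyC n J.1 J.2 →
    dyC n J.1 J.2 ≠ dyC n I.1 I.2 → ¬ P J

/-- `d_ℱ(x) = inf_{S ∈ ℱ} (ℓ(S) + dist(x,S))` for a finite family of sets with
assigned sizes. -/
def dGen (n : ℕ) (ℱ : Finset (Set (Euc n))) (Lf : Set (Euc n) → ℝ) (x : Euc n) : ℝ :=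
  ⨅ S : ℱ, (Lf S.1 + Metric.infDist x S.1)

/-- `d_ℱ(I) = inf_{x ∈ I} d_ℱ(x)` over a dyadic cube `I`. -/
def dGenI (n : ℕ) (ℱ : Finset (Set (Euc n))) (Lf : Set (Euc n) → ℝ)
    (I : ℤ × (Fin n → ℤ)) : ℝ :=
  ⨅ x : dyC n I.1 I.2, dGen n ℱ Lf x.1

/-- The unit cube `[0,1]ⁿ`. -/
def unitCube (n : ℕ) : Set (Euc n) := {x | ∀ i, x i ∈ Set.Icc (0 : ℝ) 1}

/-! The distance function `d_ℱ` is `1`-Lipschitz, so `d_ℱ(I) ≤ d_ℱ(J) + D` whenever all points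
of `I` and `J` are `D`-close. Maximality of `I` means that its parent `Î` (of sidelength `2ℓ(I)`
and diameter `2√n ℓ(I)`) violates the stopping condition, whence
`τ d_ℱ(I) ≤ τ d_ℱ(Î) + 2τ√n ℓ(I) ≤ 2(1 + τ√n) ℓ(I)`. If `η⁻¹I` and `η⁻¹J` meet, points of `I` and
`J` are `√n η⁻¹(ℓ(I) + ℓ(J))`-close, and since `τ√n ≤ η/2 ≤ 1/2` the stopping condition
`ℓ(J) < τ d_ℱ(J)` becomes `ℓ(J) < 3ℓ(I) + (ℓ(I) + ℓ(J))/2`, i.e. `ℓ(J) < 7ℓ(I)`. -/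

lemma EuclideanSpace.dist_le_sqrt_card_mul {ι : Type*} [Fintype ι] {x y : EuclideanSpace ℝ ι}
    {c : ℝ} (hc : 0 ≤ c) (h : ∀ i, |x i - y i| ≤ c) :
    dist x y ≤ Real.sqrt (Fintype.card ι) * c := by
  have hsum : ∑ i, dist (x i) (y i) ^ 2 ≤ Fintype.card ι * c ^ 2 := by
    calc ∑ i, dist (x i) (y i) ^ 2 ≤ ∑ _i : ι, c ^ 2 := by
          refine Finset.sum_le_sum fun i _ => ?_
          rw [Real.dist_eq]
          exact pow_le_pow_left₀ (abs_nonneg _) (h i) 2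
      _ = Fintype.card ι * c ^ 2 := by simp
  calc dist x y = Real.sqrt (∑ i, dist (x i) (y i) ^ 2) := EuclideanSpace.dist_eq x y
    _ ≤ Real.sqrt (Fintype.card ι * c ^ 2) := Real.sqrt_le_sqrt hsum
    _ = Real.sqrt (Fintype.card ι) * c := by
        rw [Real.sqrt_mul (Nat.cast_nonneg _), Real.sqrt_sq hc]

section DyadicCubes

variable {n : ℕ} {m : ℤ} {k : Fin n → ℤ} {x y : Euc n}

lemma two_zpow_neg_sub_one (m : ℤ) : (2 : ℝ) ^ (-(m - 1)) = 2 * (2 : ℝ) ^ (-m) := by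
  rw [neg_sub, sub_eq_neg_add, zpow_add₀ two_ne_zero, zpow_one, mul_comm]

lemma dyC_nonempty (n : ℕ) (m : ℤ) (k : Fin n → ℤ) : (dyC n m k).Nonempty := by
  refine ⟨WithLp.toLp 2 fun i => (k i : ℝ) * (2 : ℝ) ^ (-m), fun i => ?_⟩
  have : (0 : ℝ) < (2 : ℝ) ^ (-m) := by positivity
  constructor <;> linarith

lemma abs_sub_lt_of_mem_dyC (hx : x ∈ dyC n m k) (hy : y ∈ dyC n m k) (i : Fin n) :
    |x i - y i| < (2 : ℝ) ^ (-m) := by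
  obtain ⟨hx₁, hx₂⟩ := hx i
  obtain ⟨hy₁, hy₂⟩ := hy i
  rw [abs_lt]
  constructor <;> linarith

lemma dist_le_of_mem_dyC (hx : x ∈ dyC n m k) (hy : y ∈ dyC n m k) :
    dist x y ≤ Real.sqrt n * (2 : ℝ) ^ (-m) := by
  simpa using EuclideanSpace.dist_le_sqrt_card_mul (by positivity)
    fun i => (abs_sub_lt_of_mem_dyC hx hy i).le

lemma dyC_subset_parent (m : ℤ) (k : Fin n → ℤ) :
    dyC n m k ⊆ dyC n (m - 1) (fun i => k i / 2) := by
  intro x hx i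
  obtain ⟨hx₁, hx₂⟩ := hx i
  have hs : (0 : ℝ) < (2 : ℝ) ^ (-m) := by positivity
  have hlo : ((2 * (k i / 2) : ℤ) : ℝ) ≤ k i := by exact_mod_cast (by omega : 2 * (k i / 2) ≤ k i)
  have hhi : (k i + 1 : ℝ) ≤ ((2 * (k i / 2) + 2 : ℤ) : ℝ) := by exact_mod_cast (by omega)
  push_cast at hlo hhi
  rw [two_zpow_neg_sub_one]
  constructor <;> nlinarith

/-- A cube of sidelength `2s` contains two points whose first coordinates differ by `s`, which
no cube of sidelength `s` does. -/
lemma dyC_sub_one_ne (hn : 0 < n) (k' : Fin n → ℤ) : dyC n (m - 1) k' ≠ dyC n m k := by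
  set s : ℝ := (2 : ℝ) ^ (-m)
  have hs : 0 < s := by positivity
  have hS : (2 : ℝ) ^ (-(m - 1)) = 2 * s := two_zpow_neg_sub_one m
  let i₀ : Fin n := ⟨0, hn⟩
  let p : ℝ → Euc n := fun t => WithLp.toLp 2 fun i =>
    (k' i : ℝ) * (2 * s) + if i = i₀ then t else 0
  have hp : ∀ t, 0 ≤ t → t < 2 * s → p t ∈ dyC n (m - 1) k' := by
    intro t ht₀ ht₁ i
    simp only [p, hS]
    split_ifs <;> constructor <;> linarith
  intro h
  have hmem₀ := h ▸ hp 0 le_rfl (by linarith)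
  have hmem₁ := h ▸ hp s hs.le (by linarith)
  have hlt := abs_sub_lt_of_mem_dyC hmem₁ hmem₀ i₀
  have hgap : (p s) i₀ - (p 0) i₀ = s := by simp [p]
  rw [hgap, abs_of_pos hs] at hlt
  exact lt_irrefl s hlt

lemma abs_sub_le_of_mem_dyC_of_mem_dilC {η : ℝ} (hη0 : 0 < η) (hη1 : η ≤ 1)
    (hx : x ∈ dyC n m k) (hy : y ∈ dilC n η m k) (i : Fin n) :
    |x i - y i| ≤ η⁻¹ * (2 : ℝ) ^ (-m) := by
  obtain ⟨hx₁, hx₂⟩ := hx i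
  set s : ℝ := (2 : ℝ) ^ (-m)
  set c : ℝ := ((k i : ℝ) + 1 / 2) * s with hc
  have hs : 0 < s := by positivity
  have hη : 1 ≤ η⁻¹ := (one_le_inv₀ hη0).mpr hη1
  have hxc : |x i - c| ≤ s / 2 := by
    rw [abs_le, hc]
    constructor <;> linarith
  have hyc : |c - y i| ≤ η⁻¹ * s / 2 := by
    rw [abs_sub_comm]
    exact hy i
  calc |x i - y i| ≤ |x i - c| + |c - y i| := abs_sub_le _ _ _
    _ ≤ s / 2 + η⁻¹ * s / 2 := add_le_add hxc hyc
    _ ≤ η⁻¹ * s := by nlinarith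

lemma dist_le_of_mem_dyC_of_dilC_inter_nonempty {η : ℝ} (hη0 : 0 < η) (hη1 : η ≤ 1)
    {I J : ℤ × (Fin n → ℤ)} (hmeet : (dilC n η I.1 I.2 ∩ dilC n η J.1 J.2).Nonempty)
    (hx : x ∈ dyC n I.1 I.2) (hy : y ∈ dyC n J.1 J.2) :
    dist x y ≤ Real.sqrt n * (η⁻¹ * ((2 : ℝ) ^ (-I.1) + (2 : ℝ) ^ (-J.1))) := by
  obtain ⟨z, hzI, hzJ⟩ := hmeet
  simpa using EuclideanSpace.dist_le_sqrt_card_mul (by positivity) fun i =>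
    calc |x i - y i| ≤ |x i - z i| + |y i - z i| := abs_sub_comm (z i) (y i) ▸ abs_sub_le _ _ _
      _ ≤ η⁻¹ * (2 : ℝ) ^ (-I.1) + η⁻¹ * (2 : ℝ) ^ (-J.1) :=
          add_le_add (abs_sub_le_of_mem_dyC_of_mem_dilC hη0 hη1 hx hzI i)
            (abs_sub_le_of_mem_dyC_of_mem_dilC hη0 hη1 hy hzJ i)
      _ = η⁻¹ * ((2 : ℝ) ^ (-I.1) + (2 : ℝ) ^ (-J.1)) := by ring

end DyadicCubes

section DistanceFunction

variable {n : ℕ} {ℱ : Finset (Set (Euc n))} {Lf : Set (Euc n) → ℝ}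

lemma inf'_le_dGen (hℱ : ℱ.Nonempty) (x : Euc n) : ℱ.inf' hℱ Lf ≤ dGen n ℱ Lf x := by
  have : Nonempty ℱ := hℱ.coe_sort
  exact le_ciInf fun S : ℱ =>
    (Finset.inf'_le Lf S.2).trans (le_add_of_nonneg_right (infDist_nonneg (x := x) (s := S.1)))

lemma dGen_le_add_dist (hℱ : ℱ.Nonempty) (x y : Euc n) :
    dGen n ℱ Lf x ≤ dGen n ℱ Lf y + dist x y := by
  have : Nonempty ℱ := hℱ.coe_sort
  suffices dGen n ℱ Lf x - dist x y ≤ dGen n ℱ Lf y by linarith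
  refine le_ciInf fun S => ?_
  have hx : dGen n ℱ Lf x ≤ Lf S + infDist x S := ciInf_le (Set.finite_range _).bddBelow S
  linarith [infDist_le_infDist_add_dist (x := x) (y := y) (s := S.1)]

lemma dGenI_le_dGen (hℱ : ℱ.Nonempty) {I : ℤ × (Fin n → ℤ)} {x : Euc n}
    (hx : x ∈ dyC n I.1 I.2) : dGenI n ℱ Lf I ≤ dGen n ℱ Lf x := by
  have hbdd : BddBelow (range fun y : dyC n I.1 I.2 => dGen n ℱ Lf y) :=
    ⟨ℱ.inf' hℱ Lf, by rintro _ ⟨y, rfl⟩; exact inf'_le_dGen hℱ y⟩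
  exact ciInf_le hbdd ⟨x, hx⟩

lemma dGenI_le_add (hℱ : ℱ.Nonempty) (I J : ℤ × (Fin n → ℤ)) {D : ℝ}
    (hD : ∀ x ∈ dyC n I.1 I.2, ∀ y ∈ dyC n J.1 J.2, dist x y ≤ D) :
    dGenI n ℱ Lf I ≤ dGenI n ℱ Lf J + D := by
  obtain ⟨x, hx⟩ := dyC_nonempty n I.1 I.2
  have : Nonempty (dyC n J.1 J.2) := (dyC_nonempty n J.1 J.2).to_subtype
  suffices dGen n ℱ Lf x - D ≤ dGenI n ℱ Lf J by linarith [dGenI_le_dGen hℱ (Lf := Lf) hx]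
  refine le_ciInf fun y => ?_
  linarith [dGen_le_add_dist hℱ (Lf := Lf) x y, hD x hx y y.2]

end DistanceFunction

section MaximalCubes

variable {n : ℕ} {ℱ : Finset (Set (Euc n))} {Lf : Set (Euc n) → ℝ} {τ : ℝ}

lemma MaxWith.mul_dGenI_le (hn : 0 < n) (hℱ : ℱ.Nonempty) (hτ : 0 ≤ τ) {I : ℤ × (Fin n → ℤ)}
    (hI : MaxWith n (fun I' => (2 : ℝ) ^ (-I'.1) < τ * dGenI n ℱ Lf I') I) :
    τ * dGenI n ℱ Lf I ≤ 2 * (1 + τ * Real.sqrt n) * (2 : ℝ) ^ (-I.1) := by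
  set K : ℤ × (Fin n → ℤ) := (I.1 - 1, fun i => I.2 i / 2)
  have hsub : dyC n I.1 I.2 ⊆ dyC n K.1 K.2 := dyC_subset_parent I.1 I.2
  have hparent : τ * dGenI n ℱ Lf K ≤ 2 * (2 : ℝ) ^ (-I.1) := by
    rw [← two_zpow_neg_sub_one]
    exact not_lt.mp (hI.2 K hsub (dyC_sub_one_ne hn _))
  have hclose : dGenI n ℱ Lf I ≤ dGenI n ℱ Lf K + Real.sqrt n * (2 * (2 : ℝ) ^ (-I.1)) :=
    dGenI_le_add hℱ I K fun x hx y hy => by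
      simpa only [K, two_zpow_neg_sub_one] using dist_le_of_mem_dyC (hsub hx) hy
  calc τ * dGenI n ℱ Lf I ≤ τ * (dGenI n ℱ Lf K + Real.sqrt n * (2 * (2 : ℝ) ^ (-I.1))) :=
        mul_le_mul_of_nonneg_left hclose hτ
    _ ≤ 2 * (1 + τ * Real.sqrt n) * (2 : ℝ) ^ (-I.1) := by linarith

lemma MaxWith.two_zpow_neg_lt_seven_mul (hn : 0 < n) (hℱ : ℱ.Nonempty) (hτ0 : 0 ≤ τ)
    {η : ℝ} (hη0 : 0 < η) (hη1 : η ≤ 1) (hτ : τ * Real.sqrt n ≤ η / 2) {I J : ℤ × (Fin n → ℤ)}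
    (hI : MaxWith n (fun I' => (2 : ℝ) ^ (-I'.1) < τ * dGenI n ℱ Lf I') I)
    (hJ : MaxWith n (fun I' => (2 : ℝ) ^ (-I'.1) < τ * dGenI n ℱ Lf I') J)
    (hmeet : (dilC n η I.1 I.2 ∩ dilC n η J.1 J.2).Nonempty) :
    (2 : ℝ) ^ (-J.1) < 7 * (2 : ℝ) ^ (-I.1) := by
  set a : ℝ := (2 : ℝ) ^ (-I.1)
  set b : ℝ := (2 : ℝ) ^ (-J.1)
  have hab : 0 ≤ a + b := by positivity
  have hclose : dGenI n ℱ Lf J ≤ dGenI n ℱ Lf I + Real.sqrt n * (η⁻¹ * (a + b)) :=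
    dGenI_le_add hℱ J I fun x hx y hy => by
      rw [add_comm a]
      exact dist_le_of_mem_dyC_of_dilC_inter_nonempty hη0 hη1 (Set.inter_comm _ _ ▸ hmeet) hx hy
  have hτη : τ * Real.sqrt n * η⁻¹ ≤ 1 / 2 := by
    rw [← div_eq_mul_inv, div_le_iff₀ hη0]
    linarith
  have hmax := hI.mul_dGenI_le hn hℱ hτ0
  suffices b < 3 * a + 1 / 2 * (a + b) by linarith
  calc b < τ * dGenI n ℱ Lf J := hJ.1
    _ ≤ τ * (dGenI n ℱ Lf I + Real.sqrt n * (η⁻¹ * (a + b))) :=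
        mul_le_mul_of_nonneg_left hclose hτ0
    _ = τ * dGenI n ℱ Lf I + τ * Real.sqrt n * η⁻¹ * (a + b) := by ring
    _ ≤ 2 * (1 + τ * Real.sqrt n) * a + 1 / 2 * (a + b) := by
        gcongr
    _ ≤ 3 * a + 1 / 2 * (a + b) := by
        gcongr
        linarith

end MaximalCubes

theorem stmt7 (n : ℕ) (hn : 1 ≤ n) (η : ℝ) (hη0 : 0 < η) (hη1 : η < 1) :
    ∃ C : ℝ, 1 ≤ C ∧
      ∀ (ℱ : Finset (Set (Euc n))), ℱ.Nonempty → (∀ S ∈ ℱ, S.Nonempty) →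
      ∀ Lf : Set (Euc n) → ℝ, (∀ S ∈ ℱ, 0 < Lf S) →
      ∀ τ : ℝ, 0 < τ → τ < η / (2 * Real.sqrt n) →
      ∀ I J : ℤ × (Fin n → ℤ),
        MaxWith n (fun I' => (2 : ℝ) ^ (-I'.1) < τ * dGenI n ℱ Lf I') I →
        MaxWith n (fun I' => (2 : ℝ) ^ (-I'.1) < τ * dGenI n ℱ Lf I') J →
        (dilC n η I.1 I.2 ∩ dilC n η J.1 J.2).Nonempty →
        C⁻¹ * (2 : ℝ) ^ (-J.1) ≤ (2 : ℝ) ^ (-I.1) ∧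
          (2 : ℝ) ^ (-I.1) ≤ C * (2 : ℝ) ^ (-J.1) := by
  refine ⟨7, by norm_num, fun ℱ hℱ _ Lf _ τ hτ0 hτ I J hI hJ hmeet => ?_⟩
  have hτ' : τ * Real.sqrt n ≤ η / 2 := by
    have : 0 < Real.sqrt n := Real.sqrt_pos.mpr (by exact_mod_cast hn)
    rw [lt_div_iff₀ (by positivity)] at hτ
    linarith
  have hJI := hI.two_zpow_neg_lt_seven_mul hn hℱ hτ0.le hη0 hη1.le hτ' hJ hmeet
  have hIJ := hJ.two_zpow_neg_lt_seven_mul hn hℱ hτ0.le hη0 hη1.le hτ' hI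
    (Set.inter_comm _ _ ▸ hmeet)
  constructor
  · rw [inv_mul_le_iff₀ (by norm_num)]
    exact hJI.le
  · exact hIJ.le

end QCMGP
end
end

section
/- Let 1 ≤ d < n be integers, let E ⊆ ℝⁿ, let B = B(x,r) be a ball centered on E, and let 0 < ε < 1/12. Suppose there is a d-plane P with d_B(E,P) < ε. Then for all y, z ∈ E ∩ B(x, r/4), one has dist(2y−z, E) ≤ 4εr. In particular, if E is bilaterally ε-approximated by a d-plane in B, then the ball B(x, r/4) satisfies the 16ε-local symmetry condition for E. -/
open MeasureTheory Metric Set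
open scoped ENNReal NNReal

noncomputable section

namespace QCMGP

/-! Approximate `y, z ∈ E` by points `y', z'` of the plane `P`. The reflected point
`2y' - z'` again lies on `P`, within `3εr` of `2y - z`, and still inside `B(x, r)`, so the
bilateral approximation provides a point of `E` within `εr` of it. -/

lemma bddAbove_range_infDist_of_subset_ball {α : Type*} [PseudoMetricSpace α]
    {S : Set α} {x : α} {r : ℝ} (hS : S ⊆ ball x r) (F : Set α) :
    BddAbove (range fun y : S => infDist y.1 F) := by
  refine ⟨infDist x F + r, ?_⟩
  rintro _ ⟨y, rfl⟩
  calc infDist y.1 F ≤ infDist x F + dist y.1 x := infDist_le_infDist_add_dist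
    _ ≤ infDist x F + r := by linarith [mem_ball.mp (hS y.2)]

lemma ndist_comm {n : ℕ} (x : Euc n) (r : ℝ) (A B : Set (Euc n)) :
    ndist n x r A B = ndist n x r B A := by
  rw [ndist, ndist, max_comm]

lemma infDist_lt_of_ndist_lt {n : ℕ} {x : Euc n} {r ε : ℝ} {A B : Set (Euc n)}
    (hr : 0 < r) (hAB : ndist n x r A B < ε) {y : Euc n} (hy : y ∈ A ∩ ball x r) :
    infDist y B < ε * r := by
  calc infDist y B ≤ r * ndist n x r A B := by
        rw [ndist, ← mul_assoc, mul_inv_cancel₀ hr.ne', one_mul]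
        exact (le_ciSup (bddAbove_range_infDist_of_subset_ball inter_subset_right B)
          (⟨y, hy⟩ : ↥(A ∩ ball x r))).trans (le_max_left _ _)
    _ < r * ε := mul_lt_mul_of_pos_left hAB hr
    _ = ε * r := mul_comm r ε

lemma _root_.AffineSubspace.two_smul_sub_mem {V : Type*} [AddCommGroup V] [Module ℝ V]
    (P : AffineSubspace ℝ V) {y z : V} (hy : y ∈ P) (hz : z ∈ P) :
    (2 : ℝ) • y - z ∈ P := by
  convert P.smul_vsub_vadd_mem (2 : ℝ) hy hz hz using 1
  simp only [vsub_eq_sub, vadd_eq_add]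
  module

section Reflection

variable {V : Type*} [NormedAddCommGroup V] [NormedSpace ℝ V]

lemma dist_two_smul_sub_le (a b c e : V) :
    dist ((2 : ℝ) • a - b) ((2 : ℝ) • c - e) ≤ 2 * dist a c + dist b e := by
  have h : ((2 : ℝ) • a - b) - ((2 : ℝ) • c - e) = (2 : ℝ) • (a - c) - (b - e) := by module
  calc dist ((2 : ℝ) • a - b) ((2 : ℝ) • c - e) = ‖(2 : ℝ) • (a - c) - (b - e)‖ := by
        rw [dist_eq_norm, h]
    _ ≤ ‖(2 : ℝ) • (a - c)‖ + ‖b - e‖ := norm_sub_le _ _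
    _ = 2 * dist a c + dist b e := by
        rw [norm_smul, Real.norm_two, dist_eq_norm, dist_eq_norm]

lemma dist_two_smul_sub_le_self (a b c : V) :
    dist ((2 : ℝ) • a - b) c ≤ 2 * dist a c + dist b c := by
  simpa only [two_smul, add_sub_cancel_right] using dist_two_smul_sub_le a b c c

lemma infDist_two_smul_sub_lt_of_approx {E : Set V} {P : AffineSubspace ℝ V}
    (hP : (P : Set V).Nonempty) {x : V} {r δ : ℝ} (hδ : 3 * δ + 3 * (r / 4) ≤ r)
    (hEP : ∀ y ∈ E ∩ ball x r, infDist y P < δ)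
    (hPE : ∀ w ∈ (P : Set V) ∩ ball x r, infDist w E < δ)
    {y z : V} (hy : y ∈ E ∩ ball x (r / 4)) (hz : z ∈ E ∩ ball x (r / 4)) :
    infDist ((2 : ℝ) • y - z) E < 4 * δ := by
  have hyx := mem_ball.mp hy.2
  have hzx := mem_ball.mp hz.2
  have hquarter : ball x (r / 4) ⊆ ball x r :=
    ball_subset_ball (by linarith [dist_nonneg (x := y) (y := x)])
  obtain ⟨y', hy'P, hyy'⟩ :=
    (infDist_lt_iff hP).mp (hEP y ⟨hy.1, hquarter hy.2⟩)
  obtain ⟨z', hz'P, hzz'⟩ :=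
    (infDist_lt_iff hP).mp (hEP z ⟨hz.1, hquarter hz.2⟩)
  set w := (2 : ℝ) • y' - z'
  have hdist_w : dist ((2 : ℝ) • y - z) w < 3 * δ := by
    linarith [dist_two_smul_sub_le y z y' z']
  have hw_ball : w ∈ ball x r := by
    rw [mem_ball]
    linarith [dist_triangle_left w x ((2 : ℝ) • y - z), dist_two_smul_sub_le_self y z x]
  have hwE := hPE w ⟨P.two_smul_sub_mem hy'P hz'P, hw_ball⟩
  linarith [infDist_le_infDist_add_dist (x := (2 : ℝ) • y - z) (y := w) (s := E)]

end Reflection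

theorem stmt15_general (n d : ℕ) (E : Set (Euc n))
    (x : Euc n) (r ε : ℝ) (hr : 0 < r)
    (hε : ε < 1 / 12) (P : AffineSubspace ℝ (Euc n)) (hP : IsPlane n d P)
    (hclose : ndist n x r E (P : Set (Euc n)) < ε) :
    (∀ y ∈ E ∩ ball x (r / 4), ∀ z ∈ E ∩ ball x (r / 4),
      Metric.infDist ((2 : ℝ) • y - z) E ≤ 4 * ε * r) ∧
    -- in particular, `B(x, r/4)` satisfies the `16ε`-local symmetry condition
    (∀ y ∈ E ∩ ball x (r / 4), ∀ z ∈ E ∩ ball x (r / 4),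
      Metric.infDist ((2 : ℝ) • y - z) E < 16 * ε * (r / 4)) := by
  have key : ∀ y ∈ E ∩ ball x (r / 4), ∀ z ∈ E ∩ ball x (r / 4),
      infDist ((2 : ℝ) • y - z) E < 4 * (ε * r) := fun y hy z hz ↦
    infDist_two_smul_sub_lt_of_approx hP.1 (by nlinarith)
      (fun _ ↦ infDist_lt_of_ndist_lt hr hclose)
      (fun _ ↦ infDist_lt_of_ndist_lt hr ((ndist_comm x r _ _).symm.trans_lt hclose)) hy hz
  exact ⟨fun y hy z hz ↦ by linarith [key y hy z hz],
    fun y hy z hz ↦ by linarith [key y hy z hz]⟩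

theorem stmt15 (n d : ℕ) (hd1 : 1 ≤ d) (hdn : d < n) (E : Set (Euc n))
    (x : Euc n) (r ε : ℝ) (hr : 0 < r) (hx : x ∈ E) (hε0 : 0 < ε)
    (hε : ε < 1 / 12) (P : AffineSubspace ℝ (Euc n)) (hP : IsPlane n d P)
    (hclose : ndist n x r E (P : Set (Euc n)) < ε) :
    (∀ y ∈ E ∩ ball x (r / 4), ∀ z ∈ E ∩ ball x (r / 4),
      Metric.infDist ((2 : ℝ) • y - z) E ≤ 4 * ε * r) ∧
    -- in particular, `B(x, r/4)` satisfies the `16ε`-local symmetry condition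
    (∀ y ∈ E ∩ ball x (r / 4), ∀ z ∈ E ∩ ball x (r / 4),
      Metric.infDist ((2 : ℝ) • y - z) E < 16 * ε * (r / 4)) :=
  stmt15_general n d E x r ε hr hε P hP hclose

end QCMGP
end
end
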